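/- arXiv:math/0612589 — 6 statements merged into one kernel-verified Lean document; each statement's English description precedes it below -/
import Mathlib

section
/- Let D be a normed chain complex and C a dense subcomplex (i.e., Cₙ is dense in Dₙ for each n and the boundary operators restrict). Then the map H_*(C) → H_*(D) induced by the inclusion is isometric with respect to the induced semi-norms on homology. -/
/-- Cycles of a chain complex indexed over ℕ. -/
def IsCycle (C : ℕ → Type*) [∀ n, NormedAddCommGroup (C n)] [∀ n, NormedSpace ℝ (C n)]
    (d : ∀ n, C (n + 1) →L[ℝ] C n) : ∀ n, C n → Prop
  | 0, _ => True
  | (n + 1), x => d n x = 0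

/-- if `C` (given by the submodules `p n`) is a dense subcomplex of the
normed chain complex `D`, then the map `H_*(C) → H_*(D)` induced by the inclusion is
isometric: for every cycle `c` of the subcomplex, the seminorm of its class computed in
the subcomplex (infimum over boundaries of chains in the subcomplex) coincides with the
seminorm of its class in `D`. -/
theorem stmt1
    (D : ℕ → Type*) [∀ n, NormedAddCommGroup (D n)] [∀ n, NormedSpace ℝ (D n)]
    (d : ∀ n, D (n + 1) →L[ℝ] D n)
    (hdd : ∀ n x, d n (d (n + 1) x) = 0)
    (p : ∀ n, Submodule ℝ (D n))
    (hdense : ∀ n, Dense (p n : Set (D n)))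
    (hsub : ∀ n, ∀ x ∈ p (n + 1), d n x ∈ p n) :
    ∀ n, ∀ c ∈ p n, IsCycle D d n c →
      sInf {r : ℝ | ∃ b ∈ p (n + 1), r = ‖c - d n b‖} =
      sInf {r : ℝ | ∃ b : D (n + 1), r = ‖c - d n b‖} := by
  intro n c hc hcyc
  set A := {r : ℝ | ∃ b ∈ p (n + 1), r = ‖c - d n b‖} with hA
  set B := {r : ℝ | ∃ b : D (n + 1), r = ‖c - d n b‖} with hB
  have hAB : A ⊆ B := fun r ⟨b, _, hr⟩ => ⟨b, hr⟩
  have hBbdd : BddBelow B := ⟨0, fun r ⟨b, hr⟩ => hr ▸ norm_nonneg _⟩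
  have hAbdd : BddBelow A := hBbdd.mono hAB
  have hAne : A.Nonempty := ⟨‖c - d n 0‖, 0, (p (n + 1)).zero_mem, rfl⟩
  have hBne : B.Nonempty := ⟨‖c - d n 0‖, 0, rfl⟩
  refine le_antisymm ?_ (csInf_le_csInf hBbdd hAne hAB)
  refine le_of_forall_pos_le_add fun ε hε => ?_
  obtain ⟨r, hrB, hr⟩ := Real.lt_sInf_add_pos hBne (half_pos hε)
  obtain ⟨b, rfl⟩ := hrB
  have hδpos : 0 < ε / 2 / (‖d n‖ + 1) := by positivity
  obtain ⟨b', hball, hb'⟩ := Metric.dense_iff.mp (hdense (n + 1)) b _ hδpos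
  refine le_trans (csInf_le hAbdd ⟨b', hb', rfl⟩) ?_
  have h1 : ‖c - d n b'‖ ≤ ‖c - d n b‖ + ‖d n b - d n b'‖ := by
    have := norm_sub_le_norm_sub_add_norm_sub c (d n b) (d n b')
    linarith [this]
  have h2 : ‖d n b - d n b'‖ < ε / 2 := by
    rw [← map_sub]
    calc ‖d n (b - b')‖ ≤ ‖d n‖ * ‖b - b'‖ := (d n).le_opNorm _
      _ ≤ (‖d n‖ + 1) * ‖b - b'‖ := by
          have := norm_nonneg (b - b'); nlinarith
      _ < (‖d n‖ + 1) * (ε / 2 / (‖d n‖ + 1)) := by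
          have hpos : (0:ℝ) < ‖d n‖ + 1 := by positivity
          have : ‖b - b'‖ < ε / 2 / (‖d n‖ + 1) := by
            rw [← dist_eq_norm]; simpa [dist_comm, Metric.mem_ball] using hball
          exact mul_lt_mul_of_pos_left this hpos
      _ = ε / 2 := by field_simp
  linarith
end

section
/- Let C be a Banach chain complex. Then Hₙ(C) = 0 for all n if and only if Hⁿ(C') = 0 for all n, where C' is the dual Banach cochain complex. -/
/-- Coboundaries of the dual cochain complex: in degree 0 only `0` is a coboundary,
in degree `n+1` the coboundaries are the functionals of the form `g ∘ ∂ₙ₊₁`. -/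
def IsCobdry (C : ℕ → Type*) [∀ n, NormedAddCommGroup (C n)] [∀ n, NormedSpace ℝ (C n)]
    (d : ∀ n, C (n + 1) →L[ℝ] C n) : ∀ n, (C n →L[ℝ] ℝ) → Prop
  | 0, f => f = 0
  | (n + 1), f => ∃ g : C n →L[ℝ] ℝ, f = g.comp (d n)

/-! Vanishing of `Hₙ(C)` says that each `∂ₙ₊₁` maps onto the closed subspace of cycles; by the
open mapping theorem a functional killing `ker ∂` then factors continuously through `∂`, and
Hahn–Banach extends the factor from the range to all of `Cₙ`. Conversely, if the dual complex is
exact, the adjoint of `Cₙ₊₁ ⧸ ker ∂ → Cₙ` is onto, so by the open mapping theorem this injection is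
bounded below and `∂` has closed range. Every functional vanishing on that range is a cocycle,
hence a coboundary, hence kills all cycles; by Hahn–Banach every cycle lies in the range. -/

open Function

namespace ContinuousLinearMap

variable {𝕜 E F : Type*} [NormedAddCommGroup E] [NormedAddCommGroup F]

theorem exists_eq_comp_of_surjective [NontriviallyNormedField 𝕜] [NormedSpace 𝕜 E]
    [NormedSpace 𝕜 F] [CompleteSpace E] [CompleteSpace F]
    {G : Type*} [AddCommGroup G] [Module 𝕜 G] [TopologicalSpace G]
    (T : E →L[𝕜] F) (hT : Surjective T) (f : E →L[𝕜] G) (hf : T.ker ≤ f.ker) :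
    ∃ g : F →L[𝕜] G, f = g.comp T := by
  let g : F →ₗ[𝕜] G := (T.ker.liftQ f hf).comp
    (LinearMap.quotKerEquivOfSurjective (T : E →ₗ[𝕜] F) hT).symm.toLinearMap
  have hg : ∀ x, g (T x) = f x := fun x =>
    congrArg (T.ker.liftQ (f : E →ₗ[𝕜] G) hf) (LinearMap.quotKerEquivOfSurjective_symm_apply _ hT x)
  have hg_cont : Continuous g := (T.isQuotientMap hT).continuous_iff.2 <| by
    convert f.continuous using 1
    ext x
    exact hg x
  exact ⟨⟨g, hg_cont⟩, by ext x; exact (hg x).symm⟩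

variable [RCLike 𝕜] [NormedSpace 𝕜 E] [NormedSpace 𝕜 F] [CompleteSpace E]

theorem exists_eq_comp_of_isClosed_range [CompleteSpace F] (T : E →L[𝕜] F)
    (hT : IsClosed (Set.range T)) (f : StrongDual 𝕜 E) (hf : T.ker ≤ f.ker) :
    ∃ g : StrongDual 𝕜 F, f = g.comp T := by
  have : CompleteSpace (LinearMap.range (T : E →ₗ[𝕜] F)) := hT.isComplete.completeSpace_coe
  obtain ⟨g₀, rfl⟩ := T.rangeRestrict.exists_eq_comp_of_surjective
    (LinearMap.surjective_rangeRestrict _) f (by simpa using hf)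
  obtain ⟨g, hg, -⟩ := exists_extension_norm_eq _ g₀
  exact ⟨g, by ext x; exact (hg (T.rangeRestrict x)).symm⟩

theorem isClosed_range_of_forall_exists_eq_comp (T : E →L[𝕜] F)
    (h : ∀ f : StrongDual 𝕜 E, T.ker ≤ f.ker → ∃ g : StrongDual 𝕜 F, f = g.comp T) :
    IsClosed (Set.range T) := by
  have : IsClosed (T.ker : Set E) := T.isClosed_ker
  let S : E ⧸ T.ker →L[𝕜] F := T.ker.liftQL T le_rfl
  let S' : StrongDual 𝕜 F →L[𝕜] StrongDual 𝕜 (E ⧸ T.ker) := precomp 𝕜 S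
  have hS'_surj : Surjective S' := by
    intro φ
    obtain ⟨g, hg⟩ := h (φ.comp T.ker.mkQL) fun x hx => by
      simp [(Submodule.Quotient.mk_eq_zero _).2 hx]
    refine ⟨g, ?_⟩
    ext q
    obtain ⟨x, rfl⟩ := Submodule.Quotient.mk_surjective _ q
    exact congr($hg x).symm
  -- Open mapping for the adjoint `S'` of the injection `S` bounds `S` below.
  obtain ⟨K, hK, hpre⟩ := exists_preimage_norm_le _ hS'_surj
  have hS_bound : ∀ q, ‖q‖ ≤ K * ‖S q‖ := fun q =>
    NormedSpace.norm_le_dual_bound 𝕜 q (by positivity) fun φ => by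
      obtain ⟨g, rfl, hg⟩ := hpre φ
      calc ‖g (S q)‖ ≤ ‖g‖ * ‖S q‖ := g.le_opNorm _
        _ ≤ K * ‖S' g‖ * ‖S q‖ := by gcongr
        _ = K * ‖S q‖ * ‖S' g‖ := by ring
  have hS_range : Set.range S = Set.range T := by
    rw [← (Submodule.Quotient.mk_surjective _).range_comp]
    rfl
  have hS_closed := (LinearMap.range (S : E ⧸ T.ker →ₗ[𝕜] F)).isClosed_topologicalClosure
  rw [closed_range_of_antilipschitz (S.antilipschitz_of_bound (K := ⟨K, hK.le⟩) hS_bound)]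
    at hS_closed
  rw [← hS_range]
  exact hS_closed

end ContinuousLinearMap

theorem Submodule.mem_of_forall_dual_eq_zero {𝕜 F : Type*} [RCLike 𝕜] [NormedAddCommGroup F]
    [NormedSpace 𝕜 F] (S : Submodule 𝕜 F) (hS : IsClosed (S : Set F)) {y : F}
    (h : ∀ f : StrongDual 𝕜 F, (∀ s ∈ S, f s = 0) → f y = 0) : y ∈ S := by
  have := hS
  rw [← Submodule.Quotient.mk_eq_zero]
  refine SeparatingDual.eq_zero_of_forall_dual_eq_zero (R := 𝕜) fun g =>
    h (g.comp S.mkQL) fun s hs => ?_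
  simp [(Submodule.Quotient.mk_eq_zero _).2 hs]

section ChainComplex

variable {C : ℕ → Type*} [∀ n, NormedAddCommGroup (C n)] [∀ n, NormedSpace ℝ (C n)]
  {d : ∀ n, C (n + 1) →L[ℝ] C n}

theorem isCycle_d_apply (hdd : ∀ n x, d n (d (n + 1) x) = 0) : ∀ n b, IsCycle C d n (d n b)
  | 0, _ => trivial
  | n + 1, b => hdd n b

theorem isClosed_setOf_isCycle : ∀ n, IsClosed {x | IsCycle C d n x}
  | 0 => isClosed_univ
  | n + 1 => isClosed_eq (d n).continuous continuous_const

theorem IsCobdry.apply_eq_zero {n : ℕ} {f : C n →L[ℝ] ℝ} {x : C n} (hf : IsCobdry C d n f)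
    (hx : IsCycle C d n x) : f x = 0 := by
  cases n with
  | zero => simp [show f = 0 from hf]
  | succ m =>
    obtain ⟨g, rfl⟩ := hf
    simp [show d m x = 0 from hx]

end ChainComplex

/-- Duality principle: for a Banach chain complex `C`, the homology
`Hₙ(C)` vanishes for all `n` iff the cohomology `Hⁿ(C')` of the dual complex
vanishes for all `n`. -/
theorem stmt2
    (C : ℕ → Type*) [∀ n, NormedAddCommGroup (C n)] [∀ n, NormedSpace ℝ (C n)]
    [∀ n, CompleteSpace (C n)]
    (d : ∀ n, C (n + 1) →L[ℝ] C n)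
    (hdd : ∀ n x, d n (d (n + 1) x) = 0) :
    (∀ n x, IsCycle C d n x → ∃ b, d n b = x) ↔
    (∀ n (f : C n →L[ℝ] ℝ), f.comp (d n) = 0 → IsCobdry C d n f) := by
  constructor
  · intro hexact n f hf
    have hf_cycle : ∀ x, IsCycle C d n x → f x = 0 := fun x hx => by
      obtain ⟨b, rfl⟩ := hexact n x hx
      exact congr($hf b)
    cases n with
    | zero => ext x; exact hf_cycle x trivial
    | succ m =>
      have hrange : Set.range (d m) = {x | IsCycle C d m x} :=
        (Set.range_subset_iff.2 (isCycle_d_apply hdd m)).antisymm fun x hx => hexact m x hx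
      exact (d m).exists_eq_comp_of_isClosed_range (hrange ▸ isClosed_setOf_isCycle m) f hf_cycle
  · intro hexact n y hy
    have hclosed : IsClosed (Set.range (d n)) :=
      (d n).isClosed_range_of_forall_exists_eq_comp fun f hf =>
        hexact (n + 1) f (by ext x; exact hf (hdd n x))
    obtain ⟨b, hb⟩ : y ∈ LinearMap.range (d n : C (n + 1) →ₗ[ℝ] C n) :=
      Submodule.mem_of_forall_dual_eq_zero _ hclosed fun f hf =>
        (hexact n f (by ext b; exact hf _ ⟨b, rfl⟩)).apply_eq_zero hy
    exact ⟨b, hb⟩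
end

section
/- Translation principle, part 1: Let f : C → D be a morphism of Banach chain complexes with dual f' : D' → C'. Then H_*(f) : H_*(C) → H_*(D) is an isomorphism of vector spaces in every degree if and only if H^*(f') : H^*(D') → H^*(C') is an isomorphism of vector spaces in every degree. -/
/-!
`H_*(f)` is an isomorphism iff the mapping cone of `f` is acyclic, and `H^*(f')` is an
isomorphism iff the dual of that cone (the cone of `f'`) is acyclic; so it suffices that a Banach
chain complex is acyclic iff its dual is.

If `E` is acyclic, each `d` has closed range (the kernel of the next differential), so by the open
mapping theorem and Hahn–Banach every functional vanishing on `ker d` factors through `d`.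
Conversely, if `E'` is acyclic, let `T` be `d` corestricted to the cycles. Its adjoint is injective
(Hahn–Banach) and its range is the kernel of the next adjoint, so it is bounded below; Hahn–Banach
separation then shows that `T` maps the unit ball densely onto a ball, and successive
approximation makes `T` onto.
-/

namespace ContinuousLinearMap

open Metric Set Function Filter Topology

section Coprod

variable {R M₁ M₂ M : Type*} [Semiring R] [TopologicalSpace M₁] [AddCommMonoid M₁] [Module R M₁]
  [TopologicalSpace M₂] [AddCommMonoid M₂] [Module R M₂]
  [TopologicalSpace M] [AddCommMonoid M] [Module R M] [ContinuousAdd M]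

lemma coprod_zero_zero : (0 : M₁ →L[R] M).coprod (0 : M₂ →L[R] M) = 0 := by
  ext <;> simp

lemma coprod_inj {ψ ψ' : M₁ →L[R] M} {φ φ' : M₂ →L[R] M} :
    ψ.coprod φ = ψ'.coprod φ' ↔ ψ = ψ' ∧ φ = φ' := by
  refine ⟨fun h => ⟨?_, ?_⟩, fun h => h.1 ▸ h.2 ▸ rfl⟩
  · simpa using congr(($h).comp (inl R M₁ M₂))
  · simpa using congr(($h).comp (inr R M₁ M₂))

end Coprod

variable {X Y W : Type*} [NormedAddCommGroup X] [NormedSpace ℝ X]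
  [NormedAddCommGroup Y] [NormedSpace ℝ Y] [NormedAddCommGroup W] [NormedSpace ℝ W]

lemma closedBall_subset_closure_image_closedBall {T : X →L[ℝ] Y} {c : ℝ}
    (h : ∀ φ : Y →L[ℝ] ℝ, c * ‖φ‖ ≤ ‖φ.comp T‖) :
    closedBall 0 c ⊆ closure (T '' closedBall 0 1) := by
  intro y hy
  rw [mem_closedBall_zero_iff] at hy
  by_contra hy'
  obtain ⟨φ, u, hφK, hφy⟩ := geometric_hahn_banach_closed_point
    ((convex_closedBall (0 : X) 1).linear_image T.toLinearMap).closure isClosed_closure hy'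
  have hbound : ∀ x ∈ closedBall (0 : X) 1, φ (T x) < u := fun x hx =>
    hφK _ (subset_closure (mem_image_of_mem _ hx))
  have hu : 0 ≤ u := by simpa using (hbound 0 (by simp)).le
  have hφT : ‖φ.comp T‖ ≤ u := opNorm_le_of_unit_norm hu fun x hx => by
    have hpos := hbound x (by simp [hx])
    have hneg := hbound (-x) (by simp [hx])
    rw [map_neg, map_neg] at hneg
    rw [comp_apply, Real.norm_eq_abs, abs_le]
    constructor <;> linarith
  have : φ y ≤ u :=
    calc φ y ≤ ‖φ‖ * ‖y‖ := (le_abs_self _).trans (φ.le_opNorm y)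
      _ ≤ c * ‖φ‖ := by rw [mul_comm]; gcongr
      _ ≤ u := (h φ).trans hφT
  linarith

lemma surjective_of_forall_exists_approx_preimage [CompleteSpace X] (T : X →L[ℝ] Y) {C : ℝ}
    (hT : ∀ y, ∃ x, ‖y - T x‖ ≤ ‖y‖ / 2 ∧ ‖x‖ ≤ C * ‖y‖) : Surjective T := by
  choose g hg using hT
  intro y
  -- `r n` is what remains of `y` after `n` correction steps
  let r : ℕ → Y := fun n => (fun z => z - T (g z))^[n] y
  have hr_succ : ∀ n, r (n + 1) = r n - T (g (r n)) := fun n => iterate_succ_apply' _ n y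
  have hr_le : ∀ n, ‖r n‖ ≤ (1 / 2) ^ n * ‖y‖ := by
    intro n
    induction n with
    | zero => simp [r]
    | succ n ih =>
      rw [hr_succ, pow_succ]
      linarith [(hg (r n)).1]
  have hsum : Summable fun n => g (r n) := by
    refine .of_norm_bounded (summable_geometric_two.mul_left (|C| * ‖y‖)) fun n =>
      calc ‖g (r n)‖ ≤ C * ‖r n‖ := (hg (r n)).2
        _ ≤ |C| * ((1 / 2) ^ n * ‖y‖) := by gcongr; exacts [le_abs_self C, hr_le n]
        _ = |C| * ‖y‖ * (1 / 2) ^ n := by ring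
  have hpartial : ∀ n, T (∑ i ∈ Finset.range n, g (r i)) = y - r n := by
    intro n
    have hstep : ∀ i, T (g (r i)) = r i - r (i + 1) := fun i => by rw [hr_succ]; abel
    simp only [map_sum, hstep, Finset.sum_range_sub']
    rfl
  have hr0 : Tendsto r atTop (𝓝 0) := by
    refine squeeze_zero_norm hr_le ?_
    simpa using (tendsto_pow_atTop_nhds_zero_of_lt_one (by norm_num)
      (by norm_num : (1 / 2 : ℝ) < 1)).mul_const ‖y‖
  refine ⟨∑' n, g (r n), tendsto_nhds_unique
    ((T.continuous.tendsto _).comp hsum.hasSum.tendsto_sum_nat) ?_⟩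
  simp only [comp_def, hpartial]
  simpa using tendsto_const_nhds.sub hr0

lemma surjective_of_mul_norm_le_norm_comp [CompleteSpace X] (T : X →L[ℝ] Y) {c : ℝ} (hc : 0 < c)
    (h : ∀ φ : Y →L[ℝ] ℝ, c * ‖φ‖ ≤ ‖φ.comp T‖) : Surjective T := by
  refine T.surjective_of_forall_exists_approx_preimage (C := c⁻¹) fun y => ?_
  rcases eq_or_ne y 0 with rfl | hy
  · exact ⟨0, by simp⟩
  set t := ‖y‖ / c with ht
  have htpos : 0 < t := by positivity
  have hyt : ‖t⁻¹ • y‖ ≤ c := by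
    rw [norm_smul, norm_inv, Real.norm_of_nonneg htpos.le, ht, inv_div,
      div_mul_cancel₀ _ (norm_ne_zero_iff.2 hy)]
  obtain ⟨_, ⟨x, hx, rfl⟩, hdist⟩ := Metric.mem_closure_iff.1
    (closedBall_subset_closure_image_closedBall h (mem_closedBall_zero_iff.2 hyt)) (c / 2)
    (by positivity)
  rw [mem_closedBall_zero_iff] at hx
  refine ⟨t • x, ?_, ?_⟩
  · calc ‖y - T (t • x)‖ = ‖t • (t⁻¹ • y - T x)‖ := by
          rw [smul_sub, smul_inv_smul₀ htpos.ne', map_smul]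
      _ = t * ‖t⁻¹ • y - T x‖ := by rw [norm_smul, Real.norm_of_nonneg htpos.le]
      _ ≤ t * (c / 2) := by rw [← dist_eq_norm]; gcongr
      _ = ‖y‖ / 2 := by rw [ht]; field_simp
  · calc ‖t • x‖ = t * ‖x‖ := by rw [norm_smul, Real.norm_of_nonneg htpos.le]
      _ ≤ t := mul_le_of_le_one_right htpos.le hx
      _ = c⁻¹ * ‖y‖ := by rw [ht, div_eq_inv_mul]

lemma exists_eq_comp_of_isClosed_range_s5 [CompleteSpace Y] [CompleteSpace W] (S : Y →L[ℝ] W)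
    (hS : IsClosed (range S)) {φ : Y →L[ℝ] ℝ} (hφ : S.ker ≤ φ.ker) :
    ∃ ψ : W →L[ℝ] ℝ, φ = ψ.comp S := by
  let R := LinearMap.range (S : Y →ₗ[ℝ] W)
  have : CompleteSpace R := hS.completeSpace_coe
  let S' : Y →L[ℝ] R := S.codRestrict R (LinearMap.mem_range_self (S : Y →ₗ[ℝ] W))
  have hS' : Surjective S' := fun ⟨_, y, rfl⟩ => ⟨y, rfl⟩
  have hstrict : IsStrictMap (S : Y →ₗ[ℝ] W) :=
    IsEmbedding.subtypeVal.isStrictMap_iff.1 ((S'.isOpenMap hS').isStrictMap S'.continuous)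
  let e := ContinuousLinearEquiv.quotKerEquivRange hstrict
  obtain ⟨ψ, hψ, -⟩ := exists_extension_norm_eq _
    (((LinearMap.ker (S : Y →ₗ[ℝ] W)).liftQL φ hφ).comp e.symm.toContinuousLinearMap)
  refine ⟨ψ, ext fun y => ?_⟩
  have hy : e.symm ⟨S y, y, rfl⟩ = Submodule.Quotient.mk y :=
    e.symm_apply_eq.2 rfl
  simpa [hy] using (hψ ⟨S y, y, rfl⟩).symm

lemma surjective_of_dual_exact {V : Type*} [NormedAddCommGroup V] [NormedSpace ℝ V]
    [CompleteSpace X] [CompleteSpace Y] (u : V →L[ℝ] X) (T : X →L[ℝ] Y) (hTu : T.comp u = 0)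
    (hinj : ∀ ρ : Y →L[ℝ] ℝ, ρ.comp T = 0 → ρ = 0)
    (hexact : ∀ χ : X →L[ℝ] ℝ, χ.comp u = 0 → ∃ ρ : Y →L[ℝ] ℝ, χ = ρ.comp T) :
    Surjective T := by
  -- the adjoint of `T` is injective with closed range, hence bounded below
  let Θ : (Y →L[ℝ] ℝ) →L[ℝ] X →L[ℝ] ℝ := precomp ℝ T
  have hΘ_inj : Injective Θ := (injective_iff_map_eq_zero Θ).2 hinj
  have hΘ_range : range Θ = {χ | χ.comp u = 0} := by
    ext χ
    constructor
    · rintro ⟨ρ, rfl⟩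
      change (ρ.comp T).comp u = 0
      rw [comp_assoc, hTu, comp_zero]
    · intro hχ
      obtain ⟨ρ, rfl⟩ := hexact χ hχ
      exact ⟨ρ, rfl⟩
  have hΘ_closed : IsClosed (range Θ) := by
    rw [hΘ_range]
    exact isClosed_eq (precomp ℝ u).continuous continuous_const
  obtain ⟨K, hK⟩ := Θ.antilipschitz_of_injective_of_isClosed_range hΘ_inj hΘ_closed
  obtain ⟨c, hc, hΘ⟩ := antilipschitzWith_iff_exists_mul_le_norm (f := Θ) |>.1 ⟨K, hK⟩
  exact T.surjective_of_mul_norm_le_norm_comp hc hΘ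

end ContinuousLinearMap

namespace BanachComplex

open ContinuousLinearMap

universe u

-- `Prev E n` is `E (n - 1)`, with `0` in degree `0`, and `prevD d n : E n → Prev E n` is the
-- differential leaving degree `n`; they make cycles, coboundaries and the mapping cone uniform
-- in `n`.
def Prev (E : ℕ → Type u) : ℕ → Type u
  | 0 => PUnit
  | n + 1 => E n

section Complex

variable {E : ℕ → Type u} [∀ n, NormedAddCommGroup (E n)] [∀ n, NormedSpace ℝ (E n)]

instance (n : ℕ) : NormedAddCommGroup (Prev E n) :=
  match n with
  | 0 => inferInstanceAs (NormedAddCommGroup PUnit)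
  | n + 1 => inferInstanceAs (NormedAddCommGroup (E n))

instance (n : ℕ) : NormedSpace ℝ (Prev E n) :=
  match n with
  | 0 => inferInstanceAs (NormedSpace ℝ PUnit)
  | n + 1 => inferInstanceAs (NormedSpace ℝ (E n))

instance [∀ n, CompleteSpace (E n)] (n : ℕ) : CompleteSpace (Prev E n) :=
  match n with
  | 0 => inferInstanceAs (CompleteSpace PUnit)
  | n + 1 => inferInstanceAs (CompleteSpace (E n))

instance : Subsingleton (Prev E 0) := inferInstanceAs (Subsingleton PUnit)

def prevD (d : ∀ n, E (n + 1) →L[ℝ] E n) : ∀ n, E n →L[ℝ] Prev E n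
  | 0 => 0
  | n + 1 => d n

variable {d : ∀ n, E (n + 1) →L[ℝ] E n}

lemma prevD_eq_zero_iff {n : ℕ} {x : E n} : prevD d n x = 0 ↔ IsCycle E d n x := by
  cases n
  · exact iff_of_true (Subsingleton.elim _ _) trivial
  · rfl

lemma isCobdry_iff {n : ℕ} {φ : E n →L[ℝ] ℝ} :
    IsCobdry E d n φ ↔ ∃ g : Prev E n →L[ℝ] ℝ, φ = g.comp (prevD d n) := by
  cases n
  · simp [IsCobdry, prevD]
  · rfl

lemma prevD_comp_eq_zero (hd : ∀ n x, d n (d (n + 1) x) = 0) (n : ℕ) :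
    (prevD d n).comp (d n) = 0 := by
  cases n
  · rfl
  · exact ext (hd _)

variable (E d)

def IsAcyclic : Prop := ∀ n x, IsCycle E d n x → ∃ a, d n a = x

def IsDualAcyclic : Prop := ∀ n (φ : E n →L[ℝ] ℝ), φ.comp (d n) = 0 → IsCobdry E d n φ

variable {E d}

lemma IsAcyclic.isClosed_range_prevD (hd : ∀ n x, d n (d (n + 1) x) = 0) (h : IsAcyclic E d)
    (n : ℕ) : IsClosed (Set.range (prevD d n)) := by
  cases n with
  | zero => exact Set.subsingleton_of_subsingleton.isClosed
  | succ n =>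
    have hrange : Set.range (d n) = {x | prevD d n x = 0} := by
      ext x
      exact ⟨by rintro ⟨a, rfl⟩; exact congr($(prevD_comp_eq_zero hd n) a),
        fun hx => h n x (prevD_eq_zero_iff.1 hx)⟩
    exact hrange ▸ isClosed_eq (prevD d n).continuous continuous_const

variable [∀ n, CompleteSpace (E n)]

lemma IsAcyclic.isDualAcyclic (hd : ∀ n x, d n (d (n + 1) x) = 0) (h : IsAcyclic E d) :
    IsDualAcyclic E d := by
  intro n φ hφ
  refine isCobdry_iff.2 <| (prevD d n).exists_eq_comp_of_isClosed_range_s5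
    (h.isClosed_range_prevD hd n) fun x hx => ?_
  obtain ⟨a, rfl⟩ := h n x (prevD_eq_zero_iff.1 hx)
  exact congr($hφ a)

lemma IsDualAcyclic.isAcyclic (hd : ∀ n x, d n (d (n + 1) x) = 0) (h : IsDualAcyclic E d) :
    IsAcyclic E d := by
  intro n x hx
  let Z := LinearMap.ker (prevD d n : E n →ₗ[ℝ] Prev E n)
  have : CompleteSpace Z := (prevD d n).isClosed_ker.completeSpace_coe
  let T : E (n + 1) →L[ℝ] Z := (d n).codRestrict Z fun a => congr($(prevD_comp_eq_zero hd n) a)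
  have hinj : ∀ ρ : Z →L[ℝ] ℝ, ρ.comp T = 0 → ρ = 0 := by
    intro ρ hρ
    obtain ⟨φ, hφ, -⟩ := exists_extension_norm_eq Z ρ
    obtain ⟨g, rfl⟩ := isCobdry_iff.1 (h n φ (ext fun a => (hφ (T a)).trans congr($hρ a)))
    refine ext fun z => ?_
    have hz : prevD d n z = 0 := z.2
    rw [← hφ, comp_apply, hz, map_zero, zero_apply]
  have hexact : ∀ χ : E (n + 1) →L[ℝ] ℝ, χ.comp (d (n + 1)) = 0 →
      ∃ ρ : Z →L[ℝ] ℝ, χ = ρ.comp T := by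
    intro χ hχ
    obtain ⟨φ, rfl⟩ := h (n + 1) χ hχ
    exact ⟨φ.comp Z.subtypeL, rfl⟩
  obtain ⟨a, ha⟩ := surjective_of_dual_exact (d (n + 1)) T (ext fun a => Subtype.ext (hd n a))
    hinj hexact ⟨x, prevD_eq_zero_iff.2 hx⟩
  exact ⟨a, congr_arg Subtype.val ha⟩

theorem isAcyclic_iff_isDualAcyclic (hd : ∀ n x, d n (d (n + 1) x) = 0) :
    IsAcyclic E d ↔ IsDualAcyclic E d :=
  ⟨IsAcyclic.isDualAcyclic hd, IsDualAcyclic.isAcyclic hd⟩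

end Complex

section Cone

variable {C D : ℕ → Type*} [∀ n, NormedAddCommGroup (C n)] [∀ n, NormedAddCommGroup (D n)]
  [∀ n, NormedSpace ℝ (C n)] [∀ n, NormedSpace ℝ (D n)]
  (dC : ∀ n, C (n + 1) →L[ℝ] C n) (dD : ∀ n, D (n + 1) →L[ℝ] D n) (f : ∀ n, C n →L[ℝ] D n)

abbrev Cone (C D : ℕ → Type*) (n : ℕ) := D n × Prev C n

def coneD (n : ℕ) : Cone C D (n + 1) →L[ℝ] Cone C D n :=
  ((dD n).coprod (f n)).prod (-(prevD dC n).comp (snd ℝ (D (n + 1)) (C n)))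

variable {dC dD f}

lemma coneD_comp_coneD (hC : ∀ n x, dC n (dC (n + 1) x) = 0)
    (hD : ∀ n x, dD n (dD (n + 1) x) = 0) (hf : ∀ n x, f n (dC n x) = dD n (f (n + 1) x))
    (n : ℕ) (p : Cone C D (n + 2)) : coneD dC dD f n (coneD dC dD f (n + 1) p) = 0 := by
  obtain ⟨y, x⟩ : D (n + 2) × C (n + 1) := p
  refine Prod.ext ?_ ?_
  · change dD n (dD (n + 1) y + f (n + 1) x) + f n (-dC n x) = 0
    rw [map_add, map_neg, hD, hf, zero_add, add_neg_cancel]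
  · change -prevD dC n (-dC n x) = 0
    rw [map_neg, neg_neg]
    exact congr($(prevD_comp_eq_zero hC n) x)

lemma isAcyclic_cone_iff :
    IsAcyclic (Cone C D) (coneD dC dD f) ↔
      (∀ w : D 0, ∃ y x, dD 0 y + f 0 x = w) ∧
      ∀ n (y : D (n + 1)) (x : C n), dD n y + f n x = 0 → IsCycle C dC n x →
        ∃ y' x', dD (n + 1) y' + f (n + 1) x' = y ∧ -dC n x' = x := by
  constructor
  · intro h
    refine ⟨fun w => ?_, fun n y x hyx hx => ?_⟩
    · obtain ⟨⟨y, x⟩, hq⟩ := h 0 (w, PUnit.unit) trivial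
      exact ⟨y, x, congr_arg Prod.fst hq⟩
    · obtain ⟨⟨y', x'⟩, hq⟩ := h (n + 1) (y, x)
        (Prod.ext hyx (neg_eq_zero.2 (prevD_eq_zero_iff.2 hx)))
      exact ⟨y', x', congr_arg Prod.fst hq, congr_arg Prod.snd hq⟩
  · rintro ⟨h0, h⟩ n ⟨y, x⟩ hp
    cases n with
    | zero =>
      obtain ⟨y', x', hq⟩ := h0 y
      exact ⟨(y', x'), Prod.ext hq (Subsingleton.elim _ _)⟩
    | succ n =>
      obtain ⟨y', x', h1, h2⟩ := h n y x (congr_arg Prod.fst hp)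
        (prevD_eq_zero_iff.1 (neg_eq_zero.1 (congr_arg Prod.snd hp)))
      exact ⟨(y', x'), Prod.ext h1 h2⟩

lemma coprod_comp_coneD (n : ℕ) (ψ : D n →L[ℝ] ℝ) (φ : Prev C n →L[ℝ] ℝ) :
    (ψ.coprod φ).comp (coneD dC dD f n) =
      (ψ.comp (dD n)).coprod (ψ.comp (f n) - φ.comp (prevD dC n)) := by
  refine ext fun p => ?_
  change ψ (dD n p.1 + f n p.2) + φ (-prevD dC n p.2) =
    ψ (dD n p.1) + (ψ (f n p.2) - φ (prevD dC n p.2))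
  rw [map_add, map_neg]
  ring

lemma coprod_comp_coneD_eq_zero_iff (n : ℕ) (ψ : D n →L[ℝ] ℝ) (φ : Prev C n →L[ℝ] ℝ) :
    (ψ.coprod φ).comp (coneD dC dD f n) = 0 ↔
      ψ.comp (dD n) = 0 ∧ ψ.comp (f n) = φ.comp (prevD dC n) := by
  rw [coprod_comp_coneD, ← sub_eq_zero (a := ψ.comp (f n))]
  exact ⟨fun h => coprod_inj.1 (h.trans coprod_zero_zero.symm),
    fun h => (coprod_inj.2 h).trans coprod_zero_zero⟩

lemma isCobdry_cone_zero_iff (ψ : D 0 →L[ℝ] ℝ) (φ : Prev C 0 →L[ℝ] ℝ) :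
    IsCobdry (Cone C D) (coneD dC dD f) 0 (ψ.coprod φ) ↔ ψ = 0 := by
  obtain rfl : φ = 0 := ext fun x => by
    rw [Subsingleton.elim x 0, map_zero, zero_apply]
  change ψ.coprod 0 = 0 ↔ ψ = 0
  rw [← coprod_zero_zero, coprod_inj, and_iff_left rfl]

lemma isCobdry_cone_succ_iff (n : ℕ) (ψ : D (n + 1) →L[ℝ] ℝ) (φ : C n →L[ℝ] ℝ) :
    IsCobdry (Cone C D) (coneD dC dD f) (n + 1) (ψ.coprod φ) ↔
      ∃ ψ₀ : D n →L[ℝ] ℝ, ψ = ψ₀.comp (dD n) ∧ IsCobdry C dC n (φ - ψ₀.comp (f n)) := by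
  change (∃ G : Cone C D n →L[ℝ] ℝ, ψ.coprod φ = G.comp (coneD dC dD f n)) ↔ _
  constructor
  · rintro ⟨G, hG⟩
    obtain ⟨ψ₀, g, rfl⟩ : ∃ (ψ₀ : D n →L[ℝ] ℝ) (g : Prev C n →L[ℝ] ℝ), G = ψ₀.coprod g :=
      ⟨_, _, (coprod_comp_inl_inr G).symm⟩
    obtain ⟨hψ, hφ⟩ := coprod_inj.1 (hG.trans (coprod_comp_coneD n ψ₀ g))
    refine ⟨ψ₀, hψ, isCobdry_iff.2 ⟨-g, ext fun x => ?_⟩⟩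
    have hx : φ x = ψ₀ (f n x) - g (prevD dC n x) := congr($hφ x)
    change φ x - ψ₀ (f n x) = -g (prevD dC n x)
    linarith
  · rintro ⟨ψ₀, hψ, hcob⟩
    obtain ⟨g, hg⟩ := isCobdry_iff.1 hcob
    refine ⟨ψ₀.coprod (-g), (coprod_inj.2 ⟨hψ, ?_⟩).trans (coprod_comp_coneD n ψ₀ (-g)).symm⟩
    refine ext fun x => ?_
    have hx : φ x - ψ₀ (f n x) = g (prevD dC n x) := congr($hg x)
    change φ x = ψ₀ (f n x) - -g (prevD dC n x)
    linarith

lemma isDualAcyclic_cone_iff :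
    IsDualAcyclic (Cone C D) (coneD dC dD f) ↔
      (∀ ψ : D 0 →L[ℝ] ℝ, ψ.comp (dD 0) = 0 → ψ.comp (f 0) = 0 → ψ = 0) ∧
      ∀ n (ψ : D (n + 1) →L[ℝ] ℝ) (φ : C n →L[ℝ] ℝ), ψ.comp (dD (n + 1)) = 0 →
        ψ.comp (f (n + 1)) = φ.comp (dC n) →
        ∃ ψ₀ : D n →L[ℝ] ℝ, ψ = ψ₀.comp (dD n) ∧ IsCobdry C dC n (φ - ψ₀.comp (f n)) := by
  constructor
  · intro h
    refine ⟨fun ψ hψd hψf => ?_, fun n ψ φ hψd hψf => ?_⟩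
    · exact (isCobdry_cone_zero_iff ψ 0).1 (h 0 _
        ((coprod_comp_coneD_eq_zero_iff 0 ψ 0).2 ⟨hψd, hψf.trans (zero_comp _).symm⟩))
    · exact (isCobdry_cone_succ_iff n ψ φ).1 (h (n + 1) _
        ((coprod_comp_coneD_eq_zero_iff (n + 1) ψ φ).2 ⟨hψd, hψf⟩))
  · rintro ⟨h0, h⟩ n Φ hΦ
    obtain ⟨ψ, φ, rfl⟩ : ∃ (ψ : D n →L[ℝ] ℝ) (φ : Prev C n →L[ℝ] ℝ), Φ = ψ.coprod φ :=
      ⟨_, _, (coprod_comp_inl_inr Φ).symm⟩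
    obtain ⟨hψd, hψf⟩ := (coprod_comp_coneD_eq_zero_iff n ψ φ).1 hΦ
    cases n with
    | zero => exact (isCobdry_cone_zero_iff ψ φ).2 (h0 ψ hψd (hψf.trans (comp_zero φ)))
    | succ n => exact (isCobdry_cone_succ_iff n ψ φ).2 (h n ψ φ hψd hψf)

variable (dC dD f)

def IsQuasiIso : Prop :=
  (∀ n x, IsCycle C dC n x → (∃ b, dD n b = f n x) → ∃ a, dC n a = x) ∧
  (∀ n y, IsCycle D dD n y → ∃ x, IsCycle C dC n x ∧ ∃ b, y - f n x = dD n b)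

def IsDualQuasiIso : Prop :=
  (∀ n, ∀ ψ : D n →L[ℝ] ℝ, ψ.comp (dD n) = 0 →
    IsCobdry C dC n (ψ.comp (f n)) → IsCobdry D dD n ψ) ∧
  (∀ n, ∀ φ : C n →L[ℝ] ℝ, φ.comp (dC n) = 0 →
    ∃ ψ : D n →L[ℝ] ℝ, ψ.comp (dD n) = 0 ∧ IsCobdry C dC n (φ - ψ.comp (f n)))

variable {dC dD f}

lemma IsQuasiIso.isAcyclic_cone (hf : ∀ n x, f n (dC n x) = dD n (f (n + 1) x))
    (h : IsQuasiIso dC dD f) : IsAcyclic (Cone C D) (coneD dC dD f) := by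
  obtain ⟨hinj, hsurj⟩ := h
  refine isAcyclic_cone_iff.2 ⟨fun w => ?_, fun n y x hyx hx => ?_⟩
  · obtain ⟨x, -, b, hb⟩ := hsurj 0 w trivial
    exact ⟨b, x, by rw [← hb]; abel⟩
  · obtain ⟨a, ha⟩ := hinj n x hx ⟨-y, by rw [map_neg, neg_eq_iff_add_eq_zero, hyx]⟩
    have hcyc : IsCycle D dD (n + 1) (y + f (n + 1) a) := by
      change dD n (y + f (n + 1) a) = 0
      rw [map_add, ← hf, ha, hyx]
    obtain ⟨x₁, hx₁, b, hb⟩ := hsurj (n + 1) _ hcyc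
    refine ⟨b, x₁ - a, ?_, ?_⟩
    · rw [map_sub, ← hb]
      abel
    · rw [map_sub, show dC n x₁ = 0 from hx₁, ha, zero_sub, neg_neg]

lemma isQuasiIso_of_isAcyclic_cone (h : IsAcyclic (Cone C D) (coneD dC dD f)) :
    IsQuasiIso dC dD f := by
  obtain ⟨h0, h⟩ := isAcyclic_cone_iff.1 h
  refine ⟨fun n x hx ⟨b, hb⟩ => ?_, fun n y hy => ?_⟩
  · obtain ⟨-, x', -, hx'⟩ := h n (-b) x (by rw [map_neg, hb, neg_add_cancel]) hx
    exact ⟨-x', by rw [map_neg, hx']⟩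
  · cases n with
    | zero =>
      obtain ⟨b, x, hbx⟩ := h0 y
      exact ⟨x, trivial, b, by rw [← hbx]; abel⟩
    | succ n =>
      obtain ⟨b, x, hbx, hx⟩ := h n y 0 (by rw [map_zero, add_zero]; exact hy)
        (prevD_eq_zero_iff.1 (map_zero _))
      exact ⟨x, show dC n x = 0 from neg_eq_zero.1 hx, b, by rw [← hbx]; abel⟩

lemma isQuasiIso_iff_isAcyclic_cone (hf : ∀ n x, f n (dC n x) = dD n (f (n + 1) x)) :
    IsQuasiIso dC dD f ↔ IsAcyclic (Cone C D) (coneD dC dD f) :=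
  ⟨IsQuasiIso.isAcyclic_cone hf, isQuasiIso_of_isAcyclic_cone⟩

lemma IsDualQuasiIso.isDualAcyclic_cone (hf : ∀ n x, f n (dC n x) = dD n (f (n + 1) x))
    (h : IsDualQuasiIso dC dD f) : IsDualAcyclic (Cone C D) (coneD dC dD f) := by
  obtain ⟨hinj, hsurj⟩ := h
  refine isDualAcyclic_cone_iff.2 ⟨fun ψ hψd hψf => hinj 0 ψ hψd hψf, fun n ψ φ hψd hψf => ?_⟩
  obtain ⟨ψ₀, hψ₀⟩ := hinj (n + 1) ψ hψd ⟨φ, hψf⟩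
  have hcoc : (φ - ψ₀.comp (f n)).comp (dC n) = 0 := by
    have hf' : (f n).comp (dC n) = (dD n).comp (f (n + 1)) := ext (hf n)
    rw [sub_comp, comp_assoc, hf', ← comp_assoc, ← hψ₀, ← hψf, sub_self]
  obtain ⟨ρ, hρ, hcob⟩ := hsurj n _ hcoc
  refine ⟨ψ₀ + ρ, by rw [add_comp, hρ, add_zero, hψ₀], ?_⟩
  rwa [add_comp, ← sub_sub]

lemma isDualQuasiIso_of_isDualAcyclic_cone (h : IsDualAcyclic (Cone C D) (coneD dC dD f)) :
    IsDualQuasiIso dC dD f := by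
  obtain ⟨h0, h⟩ := isDualAcyclic_cone_iff.1 h
  refine ⟨fun n ψ hψ hcob => ?_, fun n φ hφ => ?_⟩
  · cases n with
    | zero => exact h0 ψ hψ hcob
    | succ n =>
      obtain ⟨g, hg⟩ := hcob
      obtain ⟨ψ₀, hψ₀, -⟩ := h n ψ g hψ hg
      exact ⟨ψ₀, hψ₀⟩
  · obtain ⟨ψ₀, hψ₀, hcob⟩ := h n 0 φ (zero_comp _) (by rw [zero_comp, hφ])
    exact ⟨ψ₀, hψ₀.symm, hcob⟩

lemma isDualQuasiIso_iff_isDualAcyclic_cone (hf : ∀ n x, f n (dC n x) = dD n (f (n + 1) x)) :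
    IsDualQuasiIso dC dD f ↔ IsDualAcyclic (Cone C D) (coneD dC dD f) :=
  ⟨IsDualQuasiIso.isDualAcyclic_cone hf, isDualQuasiIso_of_isDualAcyclic_cone⟩

end Cone

end BanachComplex

/-- Translation principle, part 1: for a morphism `f : C → D` of Banach
chain complexes with dual `f' : D' → C'`, the induced map `H_*(f)` is an isomorphism of
vector spaces in every degree iff `H^*(f')` is an isomorphism of vector spaces in every
degree. -/
theorem stmt5
    (C D : ℕ → Type*) [∀ n, NormedAddCommGroup (C n)] [∀ n, NormedAddCommGroup (D n)]
    [∀ n, NormedSpace ℝ (C n)] [∀ n, NormedSpace ℝ (D n)]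
    [∀ n, CompleteSpace (C n)] [∀ n, CompleteSpace (D n)]
    (dC : ∀ n, C (n + 1) →L[ℝ] C n) (dD : ∀ n, D (n + 1) →L[ℝ] D n)
    (hC : ∀ n x, dC n (dC (n + 1) x) = 0) (hD : ∀ n x, dD n (dD (n + 1) x) = 0)
    (f : ∀ n, C n →L[ℝ] D n)
    (hf : ∀ n x, f n (dC n x) = dD n (f (n + 1) x)) :
    -- `H_*(f)` is injective and surjective in every degree ...
    ((∀ n, ∀ x, IsCycle C dC n x → (∃ b, dD n b = f n x) → ∃ a, dC n a = x) ∧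
     (∀ n, ∀ y, IsCycle D dD n y → ∃ x, IsCycle C dC n x ∧ ∃ b, y - f n x = dD n b)) ↔
    -- ... iff `H^*(f')` is injective and surjective in every degree.
    ((∀ n, ∀ ψ : D n →L[ℝ] ℝ, ψ.comp (dD n) = 0 →
        IsCobdry C dC n (ψ.comp (f n)) → IsCobdry D dD n ψ) ∧
     (∀ n, ∀ φ : C n →L[ℝ] ℝ, φ.comp (dC n) = 0 →
        ∃ ψ : D n →L[ℝ] ℝ, ψ.comp (dD n) = 0 ∧ IsCobdry C dC n (φ - ψ.comp (f n)))) :=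
  (BanachComplex.isQuasiIso_iff_isAcyclic_cone hf).trans <|
    (BanachComplex.isAcyclic_iff_isDualAcyclic (BanachComplex.coneD_comp_coneD hC hD hf)).trans
      (BanachComplex.isDualQuasiIso_iff_isDualAcyclic_cone hf).symm
end

section
/- Duality principle for semi-norms: Let C be a normed chain complex, n ∈ ℕ, and α ∈ Hₙ(C). Then ‖α‖ = sup { 1/‖φ‖ : φ ∈ Hⁿ(C'), ⟨φ, α⟩ = 1 }, with the convention sup ∅ = 0, where ⟨·,·⟩ is the Kronecker product induced by evaluation. -/
/-- Seminorm of the homology class of a cycle. -/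
noncomputable def hSeminorm (C : ℕ → Type*) [∀ n, NormedAddCommGroup (C n)]
    [∀ n, NormedSpace ℝ (C n)] (d : ∀ n, C (n + 1) →L[ℝ] C n) (n : ℕ) (x : C n) : ℝ :=
  sInf {r : ℝ | ∃ b : C (n + 1), r = ‖x - d n b‖}

/-- Seminorm of the cohomology class of a cocycle of the dual complex. -/
noncomputable def cSeminorm (C : ℕ → Type*) [∀ n, NormedAddCommGroup (C n)]
    [∀ n, NormedSpace ℝ (C n)] (d : ∀ n, C (n + 1) →L[ℝ] C n) (n : ℕ)
    (φ : C n →L[ℝ] ℝ) : ℝ :=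
  sInf {r : ℝ | ∃ g : C n →L[ℝ] ℝ, IsCobdry C d n g ∧ r = ‖φ - g‖}

open Metric

theorem Submodule.exists_dual_eq_infDist {𝕜 E : Type*} [RCLike 𝕜] [NormedAddCommGroup E]
    [NormedSpace 𝕜 E] (S : Submodule 𝕜 E) (x : E) :
    ∃ f : StrongDual 𝕜 E, ‖f‖ ≤ 1 ∧ (∀ y ∈ S, f y = 0) ∧ f x = infDist x S := by
  set K := S.topologicalClosure
  obtain ⟨g, hg, hgx⟩ := exists_dual_vector'' 𝕜 (K.mkQ x)
  refine ⟨g.comp K.mkQL, ?_, fun y hy => ?_, ?_⟩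
  · have hK : ‖K.mkQL‖ ≤ 1 :=
      K.mkQL.opNorm_le_bound zero_le_one fun y => by
        simpa using Submodule.Quotient.norm_mk_le K y
    calc ‖g.comp K.mkQL‖ ≤ ‖g‖ * ‖K.mkQL‖ := g.opNorm_comp_le _
      _ ≤ 1 := mul_le_one₀ hg (norm_nonneg _) hK
  · simp [(Submodule.Quotient.mk_eq_zero K).2 (S.le_topologicalClosure hy)]
  · have hx : ‖K.mkQ x‖ = infDist x K := QuotientAddGroup.norm_mk (S := K.toAddSubgroup) x
    rw [ContinuousLinearMap.comp_apply, Submodule.mkQL_apply, hgx, hx,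
      Submodule.topologicalClosure_coe, infDist_closure]

section NormedChainComplex

variable {C : ℕ → Type*} [∀ n, NormedAddCommGroup (C n)] [∀ n, NormedSpace ℝ (C n)]
  {d : ∀ n, C (n + 1) →L[ℝ] C n} {n : ℕ}

lemma hSeminorm_eq_iInf (x : C n) : hSeminorm C d n x = ⨅ b, ‖x - d n b‖ := by
  rw [hSeminorm, iInf]
  congr 1
  ext r
  exact exists_congr fun _ => eq_comm

lemma hSeminorm_eq_infDist (x : C n) :
    hSeminorm C d n x = infDist x (LinearMap.range (d n : C (n + 1) →ₗ[ℝ] C n)) := by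
  rw [hSeminorm_eq_iInf, LinearMap.coe_range, infDist_eq_iInf, iInf_range']
  simp only [dist_eq_norm, ContinuousLinearMap.coe_coe]

lemma hSeminorm_nonneg (x : C n) : 0 ≤ hSeminorm C d n x := by
  rw [hSeminorm_eq_iInf]
  exact Real.iInf_nonneg fun _ => norm_nonneg _

lemma abs_apply_le_norm_mul_hSeminorm {ψ : C n →L[ℝ] ℝ} (hψ : ψ.comp (d n) = 0) (x : C n) :
    |ψ x| ≤ ‖ψ‖ * hSeminorm C d n x := by
  rw [hSeminorm_eq_iInf, Real.mul_iInf_of_nonneg (norm_nonneg ψ)]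
  refine le_ciInf fun b => ?_
  have hb : ψ (d n b) = 0 := by simpa using DFunLike.congr_fun hψ b
  calc |ψ x| = ‖ψ (x - d n b)‖ := by rw [map_sub, hb, sub_zero, Real.norm_eq_abs]
    _ ≤ ‖ψ‖ * ‖x - d n b‖ := ψ.le_opNorm _

lemma one_le_norm_mul_hSeminorm {ψ : C n →L[ℝ] ℝ} (hψ : ψ.comp (d n) = 0) {x : C n}
    (hψx : ψ x = 1) : 1 ≤ ‖ψ‖ * hSeminorm C d n x := by
  simpa [hψx] using abs_apply_le_norm_mul_hSeminorm hψ x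

lemma hSeminorm_pos {ψ : C n →L[ℝ] ℝ} (hψ : ψ.comp (d n) = 0) {x : C n} (hψx : ψ x = 1) :
    0 < hSeminorm C d n x :=
  pos_of_mul_pos_right (one_pos.trans_le (one_le_norm_mul_hSeminorm hψ hψx)) (norm_nonneg ψ)

lemma isCobdry_zero : IsCobdry C d n 0 := by
  cases n with
  | zero => rfl
  | succ m => exact ⟨0, by simp⟩

lemma IsCobdry.comp_eq_zero (hdd : ∀ n x, d n (d (n + 1) x) = 0) {g : C n →L[ℝ] ℝ}
    (hg : IsCobdry C d n g) : g.comp (d n) = 0 := by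
  cases n with
  | zero => simp [show g = 0 from hg]
  | succ m =>
    obtain ⟨h, rfl⟩ := hg
    ext x
    simp [hdd m x]

lemma IsCobdry.apply_eq_zero_s7 {g : C n →L[ℝ] ℝ} (hg : IsCobdry C d n g) {c : C n}
    (hc : IsCycle C d n c) : g c = 0 := by
  cases n with
  | zero => simp [show g = 0 from hg]
  | succ m =>
    obtain ⟨h, rfl⟩ := hg
    simp [show d m c = 0 from hc]

lemma cSeminorm_le_norm (φ : C n →L[ℝ] ℝ) : cSeminorm C d n φ ≤ ‖φ‖ :=
  csInf_le ⟨0, by rintro _ ⟨g, -, rfl⟩; exact norm_nonneg _⟩ ⟨0, isCobdry_zero, by rw [sub_zero]⟩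

lemma inv_hSeminorm_le_cSeminorm (hdd : ∀ n x, d n (d (n + 1) x) = 0) {c : C n}
    (hc : IsCycle C d n c) {φ : C n →L[ℝ] ℝ} (hφ : φ.comp (d n) = 0) (hφc : φ c = 1) :
    (hSeminorm C d n c)⁻¹ ≤ cSeminorm C d n φ := by
  refine le_csInf ⟨‖φ - 0‖, 0, isCobdry_zero, rfl⟩ ?_
  rintro _ ⟨g, hg, rfl⟩
  have hψ : (φ - g).comp (d n) = 0 := by
    rw [ContinuousLinearMap.sub_comp, hφ, hg.comp_eq_zero hdd, sub_zero]
  have hψc : (φ - g) c = 1 := by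
    rw [sub_apply, hφc, hg.apply_eq_zero_s7 hc, sub_zero]
  exact (inv_le_iff_one_le_mul₀ (hSeminorm_pos hψ hψc)).2 (one_le_norm_mul_hSeminorm hψ hψc)

lemma inv_cSeminorm_le_hSeminorm (hdd : ∀ n x, d n (d (n + 1) x) = 0) {c : C n}
    (hc : IsCycle C d n c) {φ : C n →L[ℝ] ℝ} (hφ : φ.comp (d n) = 0) (hφc : φ c = 1) :
    (cSeminorm C d n φ)⁻¹ ≤ hSeminorm C d n c :=
  inv_le_of_inv_le₀ (hSeminorm_pos hφ hφc) (inv_hSeminorm_le_cSeminorm hdd hc hφ hφc)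

lemma exists_cocycle_norm_le_inv_hSeminorm {c : C n} (hpos : 0 < hSeminorm C d n c) :
    ∃ φ : C n →L[ℝ] ℝ, φ.comp (d n) = 0 ∧ φ c = 1 ∧ ‖φ‖ ≤ (hSeminorm C d n c)⁻¹ := by
  obtain ⟨f, hf, hfd, hfc⟩ :=
    (LinearMap.range (d n : C (n + 1) →ₗ[ℝ] C n)).exists_dual_eq_infDist c
  rw [← hSeminorm_eq_infDist] at hfc
  refine ⟨(hSeminorm C d n c)⁻¹ • f, ?_, ?_, ?_⟩
  · ext b
    simp [hfd (d n b) ⟨b, rfl⟩]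
  · simp [hfc, hpos.ne']
  · rw [norm_smul, Real.norm_of_nonneg (inv_nonneg.2 hpos.le)]
    exact mul_le_of_le_one_right (inv_nonneg.2 hpos.le) hf

end NormedChainComplex

/-- Duality principle for semi-norms: for a normed chain complex `C`,
`n ∈ ℕ` and a class `α ∈ Hₙ(C)` (represented by a cycle `c`),
`‖α‖ = sup { 1/‖φ‖ : φ ∈ Hⁿ(C'), ⟨φ, α⟩ = 1 }`, with `sup ∅ = 0`
(which is the convention of `sSup` on `ℝ`). The Kronecker product `⟨φ, α⟩` is given by
evaluating a representing cocycle on `c`. -/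
theorem stmt7
    (C : ℕ → Type*) [∀ n, NormedAddCommGroup (C n)] [∀ n, NormedSpace ℝ (C n)]
    (d : ∀ n, C (n + 1) →L[ℝ] C n)
    (hdd : ∀ n x, d n (d (n + 1) x) = 0) :
    ∀ n, ∀ c : C n, IsCycle C d n c →
      hSeminorm C d n c =
        sSup {r : ℝ | ∃ φ : C n →L[ℝ] ℝ,
          φ.comp (d n) = 0 ∧ φ c = 1 ∧ r = (cSeminorm C d n φ)⁻¹} := by
  intro n c hc
  set T := {r : ℝ | ∃ φ : C n →L[ℝ] ℝ,
    φ.comp (d n) = 0 ∧ φ c = 1 ∧ r = (cSeminorm C d n φ)⁻¹}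
  rcases (hSeminorm_nonneg (d := d) c).eq_or_lt with hzero | hpos
  · have hempty : T = ∅ := Set.eq_empty_of_forall_notMem <| by
      rintro _ ⟨_, hφ, hφc, -⟩
      exact (hSeminorm_pos hφ hφc).ne' hzero.symm
    rw [hempty, Real.sSup_empty, hzero]
  · obtain ⟨φ, hφ, hφc, hnorm⟩ := exists_cocycle_norm_le_inv_hSeminorm hpos
    have hcs : cSeminorm C d n φ = (hSeminorm C d n c)⁻¹ :=
      le_antisymm ((cSeminorm_le_norm φ).trans hnorm) (inv_hSeminorm_le_cSeminorm hdd hc hφ hφc)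
    refine (IsGreatest.csSup_eq (s := T) ⟨⟨φ, hφ, hφc, by rw [hcs, inv_inv]⟩, ?_⟩).symm
    rintro _ ⟨ψ, hψ, hψc, rfl⟩
    exact inv_cSeminorm_le_hSeminorm hdd hc hψ hψc
end

section
/- If an oriented, closed, connected n-manifold M admits a continuous self-map f : M → M with |deg f| ≥ 2, then M is ℓ¹-invisible: the image of the fundamental class [M] under the comparison map Hₙ(M;ℝ) → H^{ℓ¹}ₙ(M) is zero. Concretely, if z is a singular fundamental cycle and b a singular (n+1)-chain with ∂b = z − (1/deg f)·f_#(z), then b̄ = Σ_{k≥0} (deg f)^{−k} · (f_#)^k(b) converges in the ℓ¹-completion of the singular chain complex and ∂b̄ = z. -/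
open Filter Finset UniformSpace Topology

/-! With `r = 1 / deg f`, the chain-map property turns `∂b = z - r • F z` into a telescoping sum:
`∂ (∑_{k<K} r^k • F^k b) = z - r^K • F^K z`. Since `F` does not increase norms and `|r| < 1`,
the series `∑ r^k • F^k b` converges absolutely in the completion, and `r^K • F^K z → 0`. -/

theorem iterate_map_smul {R M F : Type*} [SMul R M] [FunLike F M M] [MulActionHomClass F R M M]
    (f : F) (n : ℕ) (r : R) (x : M) : (⇑f)^[n] (r • x) = r • (⇑f)^[n] x :=
  (Function.Semiconj.iterate_right (f := (r • ·)) (fun y => (map_smul f r y).symm) n x).symm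

section Telescoping

variable {R E G : Type*} [Ring R] [AddCommGroup E] [Module R E] [AddCommGroup G] [Module R G]

theorem sum_range_pow_smul_iterate_sub_smul {F : Type*} [FunLike F G G] [LinearMapClass F R G G]
    (T : F) (r : R) (z : G) (K : ℕ) :
    ∑ k ∈ range K, r ^ k • (⇑T)^[k] (z - r • T z) = z - r ^ K • (⇑T)^[K] z := by
  have step : ∀ k, r ^ k • (⇑T)^[k] (z - r • T z)
      = r ^ k • (⇑T)^[k] z - r ^ (k + 1) • (⇑T)^[k + 1] z := fun k => by
    rw [iterate_map_sub, iterate_map_smul, ← Function.iterate_succ_apply, smul_sub, smul_smul,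
      ← pow_succ]
  simp only [step, sum_range_sub', pow_zero, one_smul, Function.iterate_zero_apply]

theorem map_sum_pow_smul_iterate_eq_sub {F₁ F₂ F₃ : Type*}
    [FunLike F₁ E G] [LinearMapClass F₁ R E G] [FunLike F₂ E E] [LinearMapClass F₂ R E E]
    [FunLike F₃ G G] [LinearMapClass F₃ R G G]
    {d : F₁} {S : F₂} {T : F₃} (hdST : Function.Semiconj d S T) {r : R} {b : E} {z : G}
    (hb : d b = z - r • T z) (K : ℕ) :
    d (∑ k ∈ range K, r ^ k • (⇑S)^[k] b) = z - r ^ K • (⇑T)^[K] z := by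
  simp only [map_sum, map_smul, (hdST.iterate_right _).eq, hb]
  exact sum_range_pow_smul_iterate_sub_smul T r z K

end Telescoping

section Nonexpansive

variable {𝕜 E : Type*} [NormedField 𝕜] [SeminormedAddCommGroup E] [NormedSpace 𝕜 E]
  {f : E → E}

theorem norm_iterate_le_of_norm_le (hf : ∀ x, ‖f x‖ ≤ ‖x‖) (k : ℕ) (x : E) :
    ‖f^[k] x‖ ≤ ‖x‖ := by
  induction k generalizing x with
  | zero => rfl
  | succ k ih => exact (ih (f x)).trans (hf x)

theorem norm_pow_smul_iterate_le (hf : ∀ x, ‖f x‖ ≤ ‖x‖) (r : 𝕜) (k : ℕ) (x : E) :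
    ‖r ^ k • f^[k] x‖ ≤ ‖r‖ ^ k * ‖x‖ := by
  rw [norm_smul, norm_pow]
  exact mul_le_mul_of_nonneg_left (norm_iterate_le_of_norm_le hf k x) (by positivity)

theorem tendsto_pow_smul_iterate_nhds_zero (hf : ∀ x, ‖f x‖ ≤ ‖x‖) {r : 𝕜} (hr : ‖r‖ < 1)
    (x : E) : Tendsto (fun k => r ^ k • f^[k] x) atTop (𝓝 0) := by
  refine squeeze_zero_norm (norm_pow_smul_iterate_le hf r · x) ?_
  simpa using (tendsto_pow_atTop_nhds_zero_of_lt_one (norm_nonneg r) hr).mul_const ‖x‖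

end Nonexpansive

theorem summable_coe_pow_smul_iterate {𝕜 E : Type*} [NormedField 𝕜] [NormedAddCommGroup E]
    [NormedSpace 𝕜 E] {f : E → E} (hf : ∀ x, ‖f x‖ ≤ ‖x‖) {r : 𝕜} (hr : ‖r‖ < 1) (x : E) :
    Summable fun k => ((r ^ k • f^[k] x : E) : Completion E) := by
  refine .of_norm_bounded ((summable_geometric_of_lt_one (norm_nonneg r) hr).mul_right ‖x‖)
    fun k => ?_
  rw [Completion.norm_coe]
  exact norm_pow_smul_iterate_le hf r k x

theorem stmt16_general
    (C : ℕ → Type*) [∀ n, NormedAddCommGroup (C n)] [∀ n, NormedSpace ℝ (C n)]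
    (d : ∀ n, C (n + 1) →L[ℝ] C n)
    (F : ∀ n, C n →L[ℝ] C n)
    (hFchain : ∀ n x, F n (d n x) = d n (F (n + 1) x))
    (hFnorm : ∀ n x, ‖F n x‖ ≤ ‖x‖)
    (dg : ℤ) (hdg : 2 ≤ |dg|)
    (n : ℕ) (z : C (n + 1))
    (b : C (n + 2)) (hb : d (n + 1) b = z - ((dg : ℝ))⁻¹ • F (n + 1) z) :
    ∃ s : Completion (C (n + 2)),
      Tendsto
        (fun K => ((∑ k ∈ Finset.range K,
          ((dg : ℝ)⁻¹) ^ k • (⇑(F (n + 2)))^[k] b : C (n + 2)) :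
            Completion (C (n + 2)))) atTop (nhds s) ∧
      Tendsto
        (fun K => ((d (n + 1) (∑ k ∈ Finset.range K,
          ((dg : ℝ)⁻¹) ^ k • (⇑(F (n + 2)))^[k] b) : C (n + 1)) :
            Completion (C (n + 1)))) atTop
        (nhds ((z : C (n + 1)) : Completion (C (n + 1)))) := by
  have hr : ‖(dg : ℝ)⁻¹‖ < 1 := by
    rw [norm_inv, Real.norm_eq_abs, ← Int.cast_abs]
    exact inv_lt_one_of_one_lt₀ (by exact_mod_cast hdg)
  have hdF : Function.Semiconj (d (n + 1)) (F (n + 2)) (F (n + 1)) :=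
    fun x => (hFchain (n + 1) x).symm
  obtain ⟨s, hs⟩ := summable_coe_pow_smul_iterate (hFnorm (n + 2)) hr b
  refine ⟨s, ?_, ?_⟩
  · exact hs.tendsto_sum_nat.congr fun K =>
      (map_sum (Completion.toCompl (α := C (n + 2))) _ _).symm
  · simp only [map_sum_pow_smul_iterate_eq_sub hdF hb]
    have hlim := (tendsto_pow_smul_iterate_nhds_zero (hFnorm (n + 1)) hr z).const_sub z
    rw [sub_zero] at hlim
    exact ((Completion.continuous_coe _).tendsto z).comp hlim

/-- ℓ¹-invisibility via self-maps of degree ≥ 2, chain level: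
Let `C` be a normed chain complex (the singular chain complex of an oriented, closed,
connected `n`-manifold `M`), `F` a chain endomorphism (induced by a self-map
`f : M → M`) that does not increase the ℓ¹-norm, and `dg` an integer with `|dg| ≥ 2`
(the degree of `f`).  If `z` is a cycle (a fundamental cycle of `M`) and `b` a chain
with `∂b = z − dg⁻¹ • F z` (which exists since `f_*[M] = dg·[M]`), then the series
`b̄ = Σₖ dg⁻ᵏ • Fᵏ b` converges in the ℓ¹-completion of the chain complex and
`∂b̄ = z`; hence the image of the fundamental class under the comparison map to
ℓ¹-homology is zero, i.e. `M` is ℓ¹-invisible. -/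
theorem stmt16
    (C : ℕ → Type*) [∀ n, NormedAddCommGroup (C n)] [∀ n, NormedSpace ℝ (C n)]
    (d : ∀ n, C (n + 1) →L[ℝ] C n)
    (hdd : ∀ n x, d n (d (n + 1) x) = 0)
    (F : ∀ n, C n →L[ℝ] C n)
    (hFchain : ∀ n x, F n (d n x) = d n (F (n + 1) x))
    (hFnorm : ∀ n x, ‖F n x‖ ≤ ‖x‖)
    (dg : ℤ) (hdg : 2 ≤ |dg|)
    (n : ℕ) (z : C (n + 1)) (hz : d n z = 0)
    (b : C (n + 2)) (hb : d (n + 1) b = z - ((dg : ℝ))⁻¹ • F (n + 1) z) :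
    ∃ s : Completion (C (n + 2)),
      Tendsto
        (fun K => ((∑ k ∈ Finset.range K,
          ((dg : ℝ)⁻¹) ^ k • (⇑(F (n + 2)))^[k] b : C (n + 2)) :
            Completion (C (n + 2)))) atTop (nhds s) ∧
      Tendsto
        (fun K => ((d (n + 1) (∑ k ∈ Finset.range K,
          ((dg : ℝ)⁻¹) ^ k • (⇑(F (n + 2)))^[k] b) : C (n + 1)) :
            Completion (C (n + 1)))) atTop
        (nhds ((z : C (n + 1)) : Completion (C (n + 1)))) :=
  stmt16_general C d F hFchain hFnorm dg hdg n z b hb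
end

section
/- Vanishing of simplicial volume under ℓ¹-triviality of top homology: let M be an oriented, connected n-manifold without boundary. The simplicial volume ‖M‖ equals the infimum of the ℓ¹-semi-norms of classes α in the set of ℓ¹-fundamental classes of M inside H^{ℓ¹}ₙ(M); consequently, if H^{ℓ¹}ₙ(M) = 0, then ‖M‖ ∈ {0, ∞}. -/
/-- simplicial volume via ℓ¹-homology: Let `C` be a Banach chain
complex (the ℓ¹-chain complex of an oriented, connected `n`-manifold `M` without
boundary), `P` a dense subcomplex (the locally finite chains of finite ℓ¹-norm) and
`L ⊆ P n` the set of (locally finite) fundamental cycles of `M` of finite ℓ¹-norm;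
`L` consists of cycles and is stable under adding boundaries of chains of the
subcomplex.  Then the simplicial volume `‖M‖ = inf {‖c‖ : c ∈ L}` equals the infimum
of the ℓ¹-seminorms of the classes of elements of `L` (the ℓ¹-fundamental classes) in
`H_n(C)`; consequently, if `H_n(C) = 0` then `‖M‖ ∈ {0, ∞}` (that is: either there is
no locally finite fundamental cycle of finite ℓ¹-norm at all, or `‖M‖ = 0`). -/
theorem stmt17
    (C : ℕ → Type*) [∀ n, NormedAddCommGroup (C n)] [∀ n, NormedSpace ℝ (C n)]
    [∀ n, CompleteSpace (C n)]
    (d : ∀ n, C (n + 1) →L[ℝ] C n)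
    (hdd : ∀ n x, d n (d (n + 1) x) = 0)
    (n : ℕ)
    (P : ∀ m, Submodule ℝ (C m))
    (hPdense : ∀ m, Dense (P m : Set (C m)))
    (hPd : ∀ m, ∀ x ∈ P (m + 1), d m x ∈ P m)
    (L : Set (C n))
    (hLP : L ⊆ (P n : Set (C n)))
    (hLcyc : ∀ c ∈ L, IsCycle C d n c)
    (hLbd : ∀ c ∈ L, ∀ b ∈ P (n + 1), c + d n b ∈ L) :
    sInf {r : ℝ | ∃ c ∈ L, r = ‖c‖} = sInf {r : ℝ | ∃ c ∈ L, r = hSeminorm C d n c} ∧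
    ((∀ z : C n, IsCycle C d n z → ∃ w, d n w = z) →
      (L = ∅ ∨ sInf {r : ℝ | ∃ c ∈ L, r = ‖c‖} = 0)) := by

  classical
  -- Abbreviations
  set A : Set ℝ := {r : ℝ | ∃ c ∈ L, r = ‖c‖} with hA
  set B : Set ℝ := {r : ℝ | ∃ c ∈ L, r = hSeminorm C d n c} with hB
  have hAnn : ∀ r ∈ A, (0:ℝ) ≤ r := by
    rintro r ⟨c, hc, rfl⟩; exact norm_nonneg c
  have hSnn : ∀ x : C n, 0 ≤ hSeminorm C d n x := by
    intro x
    apply Real.sInf_nonneg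
    rintro r ⟨b, rfl⟩; exact norm_nonneg _
  have hBnn : ∀ r ∈ B, (0:ℝ) ≤ r := by
    rintro r ⟨c, hc, rfl⟩; exact hSnn c
  have hAbdd : BddBelow A := ⟨0, hAnn⟩
  have hBbdd : BddBelow B := ⟨0, hBnn⟩
  -- hSeminorm x ≤ ‖x - d n b‖ for any b
  have hSle : ∀ (x : C n) (b : C (n+1)), hSeminorm C d n x ≤ ‖x - d n b‖ := by
    intro x b
    refine csInf_le ⟨0, ?_⟩ ⟨b, rfl⟩
    rintro r ⟨b', rfl⟩; exact norm_nonneg _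
  have hSle' : ∀ x : C n, hSeminorm C d n x ≤ ‖x‖ := by
    intro x
    simpa using hSle x 0
  -- approximation: for c ∈ L, ε > 0, there is c' ∈ L with ‖c'‖ < hSeminorm c + ε
  have happrox : ∀ c ∈ L, ∀ ε : ℝ, 0 < ε → ∃ c' ∈ L, ‖c'‖ < hSeminorm C d n c + ε := by
    intro c hc ε hε
    have hne : {r : ℝ | ∃ b : C (n+1), r = ‖c - d n b‖}.Nonempty := ⟨‖c - d n 0‖, 0, rfl⟩
    obtain ⟨r, ⟨b₀, rfl⟩, hr⟩ := Real.lt_sInf_add_pos hne (half_pos hε)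
    have hδpos : 0 < ε / 2 / (‖d n‖ + 1) := by positivity
    obtain ⟨b, hbP, hbd⟩ := Metric.mem_closure_iff.mp ((hPdense (n+1)) b₀) _ hδpos
    refine ⟨c + d n (-b), hLbd c hc (-b) (neg_mem hbP), ?_⟩
    have h1 : ‖c + d n (-b)‖ = ‖c - d n b‖ := by
      rw [map_neg, ← sub_eq_add_neg]
    rw [h1]
    have h2 : ‖c - d n b‖ ≤ ‖c - d n b₀‖ + ‖d n b₀ - d n b‖ := by
      have := norm_add_le (c - d n b₀) (d n b₀ - d n b)
      simpa [sub_add_sub_cancel] using this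
    have h3 : ‖d n b₀ - d n b‖ ≤ ‖d n‖ * ‖b₀ - b‖ := by
      rw [← map_sub]; exact (d n).le_opNorm _
    have h4 : ‖b₀ - b‖ < ε / 2 / (‖d n‖ + 1) := by
      rw [← dist_eq_norm]; exact hbd
    have h5 : ‖d n‖ * ‖b₀ - b‖ < ε / 2 := by
      calc ‖d n‖ * ‖b₀ - b‖ ≤ (‖d n‖ + 1) * ‖b₀ - b‖ := by
            apply mul_le_mul_of_nonneg_right (by linarith [norm_nonneg (d n)]) (norm_nonneg _)
        _ < (‖d n‖ + 1) * (ε / 2 / (‖d n‖ + 1)) := by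
            apply mul_lt_mul_of_pos_left h4 (by positivity)
        _ = ε / 2 := by field_simp
    calc ‖c - d n b‖ ≤ ‖c - d n b₀‖ + ‖d n b₀ - d n b‖ := h2
      _ < (hSeminorm C d n c + ε / 2) + ε / 2 := by
          have := le_trans h3 (le_of_lt h5)
          unfold hSeminorm
          linarith
      _ = hSeminorm C d n c + ε := by ring
  -- the main equality
  have hmain : sInf A = sInf B := by
    rcases Set.eq_empty_or_nonempty L with hL | ⟨c₀, hc₀⟩
    · have : A = ∅ := by
        simp [hA, hL]
      have hB' : B = ∅ := by
        simp [hB, hL]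
      rw [this, hB']
    · have hAne : A.Nonempty := ⟨‖c₀‖, c₀, hc₀, rfl⟩
      have hBne : B.Nonempty := ⟨hSeminorm C d n c₀, c₀, hc₀, rfl⟩
      apply le_antisymm
      · apply le_csInf hBne
        rintro r ⟨c, hc, rfl⟩
        apply le_of_forall_pos_le_add
        intro ε hε
        obtain ⟨c', hc', hlt⟩ := happrox c hc ε hε
        exact le_trans (csInf_le hAbdd ⟨c', hc', rfl⟩) (le_of_lt hlt)
      · apply le_csInf hAne
        rintro r ⟨c, hc, rfl⟩
        exact le_trans (csInf_le hBbdd ⟨c, hc, rfl⟩) (hSle' c)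
  refine ⟨hmain, ?_⟩
  intro hzero
  rcases Set.eq_empty_or_nonempty L with hL | ⟨c₀, hc₀⟩
  · exact Or.inl hL
  · right
    obtain ⟨w, hw⟩ := hzero c₀ (hLcyc c₀ hc₀)
    have h0 : hSeminorm C d n c₀ = 0 := by
      have h1 : hSeminorm C d n c₀ ≤ ‖c₀ - d n w‖ := hSle c₀ w
      rw [hw, sub_self, norm_zero] at h1
      exact le_antisymm h1 (hSnn c₀)
    have hB0 : sInf B ≤ 0 := by
      rw [← h0]
      exact csInf_le hBbdd ⟨c₀, hc₀, rfl⟩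
    have hB0' : 0 ≤ sInf B := Real.sInf_nonneg hBnn
    rw [hmain]
    linarith
end
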